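/- Let n ≥ 2 be an integer. Then 2·T(a) = 2·sinh^{n−1}(a) · ∫_a^∞ (sinh^{2n−2}(u) − sinh^{2n−2}(a))^{−1/2} du tends to 0 as a → 0⁺. -/

import Mathlib

/-!
Write `b = sinh a` and `k = 2n - 2`. For `u > a` the addition formula gives
`sinh u - b ≥ sinh (u - a)`, hence
`sinh u ^ k - b ^ k ≥ (sinh u - b) b ^ (k - 1) ≥ sinh (u - a) b ^ (k - 1)`.
After the shift `u ↦ u - a` the integral in `T n a` is therefore at most
`b ^ (-(k - 1)/2) · C` with `C = ∫₀^∞ sinh^(-1/2)`, which converges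
(`sinh t ≥ t` near `0`, `sinh t ≥ eᵗ/4` near `∞`).
Since `b ^ (n - 1) · b ^ (-(2n - 3)/2) = √b`, we get `0 ≤ T n a ≤ √(sinh a) · C → 0`.
-/

open Real MeasureTheory Set Filter Topology

/-- `T n a = sinh^{n-1}(a) · ∫_a^∞ (sinh^{2n-2}(u) − sinh^{2n-2}(a))^{-1/2} du`. -/
noncomputable def T (n : ℕ) (a : ℝ) : ℝ :=
  Real.sinh a ^ (n - 1) *
    ∫ u in Set.Ioi a,
      (Real.sinh u ^ (2 * n - 2) - Real.sinh a ^ (2 * n - 2)) ^ (-(1 : ℝ) / 2)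

lemma sinh_sub_le_sinh_sub_sinh {a u : ℝ} (ha : 0 ≤ a) (hau : a ≤ u) :
    sinh (u - a) ≤ sinh u - sinh a := by
  have h₁ : sinh (u - a) ≤ sinh (u - a) * cosh a :=
    le_mul_of_one_le_right (sinh_nonneg_iff.2 (sub_nonneg.2 hau)) (one_le_cosh a)
  have h₂ : sinh a ≤ cosh (u - a) * sinh a :=
    le_mul_of_one_le_left (sinh_nonneg_iff.2 ha) (one_le_cosh _)
  have h := sinh_add (u - a) a
  rw [sub_add_cancel] at h
  linarith

lemma sub_mul_pow_le_pow_succ_sub_pow_succ {R : Type*} [CommRing R] [PartialOrder R]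
    [IsOrderedRing R] {b s : R} (hb : 0 ≤ b) (hbs : b ≤ s) (k : ℕ) :
    (s - b) * b ^ k ≤ s ^ (k + 1) - b ^ (k + 1) := by
  have h : s ^ (k + 1) - b ^ (k + 1) - (s - b) * b ^ k = s * (s ^ k - b ^ k) := by ring
  have : 0 ≤ s * (s ^ k - b ^ k) :=
    mul_nonneg (hb.trans hbs) (sub_nonneg.2 (pow_le_pow_left₀ hb hbs k))
  exact sub_nonneg.1 (h ▸ this)

lemma exp_div_four_le_sinh {t : ℝ} (ht : 1 / 2 ≤ t) : exp t / 4 ≤ sinh t := by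
  have h₂ : 2 ≤ exp (2 * t) := by linarith [add_one_le_exp (2 * t)]
  have h : exp t = exp (2 * t) * exp (-t) := by rw [← exp_add]; ring_nf
  rw [sinh_eq]
  nlinarith [exp_pos (-t)]

lemma integrableOn_sinh_rpow_neg {p : ℝ} (hp₀ : 0 < p) (hp₁ : p < 1) :
    IntegrableOn (fun t ↦ sinh t ^ (-p)) (Ioi 0) := by
  have hmeas : AEStronglyMeasurable (fun t ↦ sinh t ^ (-p)) :=
    (measurable_sinh.pow_const _).aestronglyMeasurable
  rw [← Ioc_union_Ioi_eq_Ioi zero_le_one]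
  refine IntegrableOn.union ?_ ?_
  · have hdom : IntegrableOn (fun t : ℝ ↦ t ^ (-p)) (Ioc 0 1) :=
      (intervalIntegrable_iff_integrableOn_Ioc_of_le zero_le_one).1
        (intervalIntegral.intervalIntegrable_rpow' (by linarith))
    refine hdom.mono' hmeas.restrict ?_
    filter_upwards [ae_restrict_mem measurableSet_Ioc] with t ⟨ht, _⟩
    rw [norm_of_nonneg (rpow_nonneg (sinh_pos_iff.2 ht).le _)]
    exact rpow_le_rpow_of_nonpos ht (self_le_sinh_iff.2 ht.le) (by linarith)
  · have hdom : IntegrableOn (fun t ↦ exp (-p * t) / 4 ^ (-p)) (Ioi 1) :=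
      (exp_neg_integrableOn_Ioi 1 hp₀).div_const _
    refine hdom.mono' hmeas.restrict ?_
    filter_upwards [ae_restrict_mem measurableSet_Ioi] with t (ht : 1 < t)
    rw [norm_of_nonneg (rpow_nonneg (sinh_pos_iff.2 (by linarith)).le _)]
    calc sinh t ^ (-p) ≤ (exp t / 4) ^ (-p) :=
          rpow_le_rpow_of_nonpos (by positivity) (exp_div_four_le_sinh (by linarith))
            (by linarith)
      _ = exp (-p * t) / 4 ^ (-p) := by
          rw [div_rpow (exp_pos t).le (by norm_num), ← exp_mul, mul_comm]

lemma integrableOn_Ioi_comp_sub_iff {E : Type*} [NormedAddCommGroup E] {f : ℝ → E} (a : ℝ) :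
    IntegrableOn (fun u ↦ f (u - a)) (Ioi a) ↔ IntegrableOn f (Ioi 0) := by
  simpa [Function.comp_def] using
    (measurePreserving_sub_right volume a).integrableOn_comp_preimage
    (measurableEmbedding_subRight a) (f := f) (s := Ioi 0)

lemma setIntegral_Ioi_comp_sub {E : Type*} [NormedAddCommGroup E] [NormedSpace ℝ E]
    (f : ℝ → E) (a : ℝ) :
    ∫ u in Ioi a, f (u - a) = ∫ t in Ioi 0, f t := by
  simpa using (measurePreserving_sub_right volume a).setIntegral_preimage_emb
    (measurableEmbedding_subRight a) f (Ioi 0)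

lemma setIntegral_sinh_pow_sub_rpow_le {p : ℝ} (hp₀ : 0 < p) (hp₁ : p < 1) {a : ℝ}
    (ha : 0 < a) (k : ℕ) :
    ∫ u in Ioi a, (sinh u ^ (k + 1) - sinh a ^ (k + 1)) ^ (-p) ≤
      (sinh a ^ k) ^ (-p) * ∫ t in Ioi 0, sinh t ^ (-p) := by
  have hb : 0 < sinh a := sinh_pos_iff.2 ha
  rw [← setIntegral_Ioi_comp_sub, ← integral_const_mul]
  refine integral_mono_of_nonneg ?_ ?_ ?_
  · filter_upwards [ae_restrict_mem measurableSet_Ioi] with u (hu : a < u)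
    exact rpow_nonneg (sub_nonneg.2 (pow_le_pow_left₀ hb.le (sinh_le_sinh.2 hu.le) _)) _
  · exact ((integrableOn_Ioi_comp_sub_iff a).2
      (integrableOn_sinh_rpow_neg hp₀ hp₁)).const_mul _
  · filter_upwards [ae_restrict_mem measurableSet_Ioi] with u (hu : a < u)
    have hua : 0 < sinh (u - a) := sinh_pos_iff.2 (sub_pos.2 hu)
    have hlower : sinh (u - a) * sinh a ^ k ≤ sinh u ^ (k + 1) - sinh a ^ (k + 1) :=
      (mul_le_mul_of_nonneg_right (sinh_sub_le_sinh_sub_sinh ha.le hu.le) (by positivity)).trans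
        (sub_mul_pow_le_pow_succ_sub_pow_succ hb.le (sinh_le_sinh.2 hu.le) k)
    calc (sinh u ^ (k + 1) - sinh a ^ (k + 1)) ^ (-p)
        ≤ (sinh (u - a) * sinh a ^ k) ^ (-p) :=
          rpow_le_rpow_of_nonpos (by positivity) hlower (by linarith)
      _ = (sinh a ^ k) ^ (-p) * sinh (u - a) ^ (-p) := by
          rw [mul_rpow hua.le (by positivity), mul_comm]

lemma pow_succ_mul_pow_rpow_neg_half {b : ℝ} (hb : 0 < b) (m : ℕ) :
    b ^ (m + 1) * (b ^ (2 * m + 1)) ^ (-(1 / 2 : ℝ)) = √b := by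
  rw [sqrt_eq_rpow, ← rpow_natCast, ← rpow_natCast, ← rpow_mul hb.le, ← rpow_add hb]
  push_cast
  ring_nf

lemma T_nonneg (n : ℕ) {a : ℝ} (ha : 0 ≤ a) : 0 ≤ T n a := by
  have hb : 0 ≤ sinh a := sinh_nonneg_iff.2 ha
  refine mul_nonneg (pow_nonneg hb _) (setIntegral_nonneg measurableSet_Ioi fun u hu ↦ ?_)
  exact rpow_nonneg (sub_nonneg.2 (pow_le_pow_left₀ hb (sinh_le_sinh.2 (le_of_lt hu)) _)) _

lemma T_le_sqrt_sinh_mul (m : ℕ) {a : ℝ} (ha : 0 < a) :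
    T (m + 2) a ≤ √(sinh a) * ∫ t in Ioi 0, sinh t ^ (-(1 / 2 : ℝ)) := by
  have hb : 0 < sinh a := sinh_pos_iff.2 ha
  have hk : 2 * (m + 2) - 2 = 2 * m + 1 + 1 := by omega
  rw [T, hk, show m + 2 - 1 = m + 1 from rfl, neg_div, ← pow_succ_mul_pow_rpow_neg_half hb m,
    mul_assoc]
  exact mul_le_mul_of_nonneg_left
    (setIntegral_sinh_pow_sub_rpow_le (by norm_num) (by norm_num) ha _) (by positivity)

/-- The height `2·T(a)` of the rotational minimal `n`-catenoid tends to `0`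
as `a → 0⁺`. -/
theorem height_tendsto_zero (n : ℕ) (hn : 2 ≤ n) :
    Filter.Tendsto (fun a : ℝ => 2 * T n a) (nhdsWithin 0 (Set.Ioi 0)) (nhds 0) := by
  obtain ⟨m, rfl⟩ := Nat.exists_eq_add_of_le' hn
  set C := ∫ t in Ioi 0, sinh t ^ (-(1 / 2 : ℝ))
  have hbound : Tendsto (fun a ↦ 2 * (√(sinh a) * C)) (𝓝[>] 0) (𝓝 0) := by
    have hcont : Continuous fun a ↦ 2 * (√(sinh a) * C) := by fun_prop
    simpa using (hcont.tendsto 0).mono_left nhdsWithin_le_nhds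
  refine squeeze_zero' ?_ ?_ hbound
  · filter_upwards [self_mem_nhdsWithin] with a (ha : 0 < a)
    exact mul_nonneg zero_le_two (T_nonneg _ ha.le)
  · filter_upwards [self_mem_nhdsWithin] with a (ha : 0 < a)
    exact mul_le_mul_of_nonneg_left (T_le_sqrt_sinh_mul m ha) zero_le_two
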